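/- Let p ∈ [0,1], δ > 0, and let f : ℝ^n → ℝ be convex, differentiable, and (L,p)-Hölder smooth. Let L_δ > 0 be any constant with L_δ ≥ ((1−p)/((1+p)δ))^{(1−p)/(1+p)} · L^{2/(1+p)}, with the convention that the first factor equals 1 when p = 1. Then for all x, y ∈ ℝ^n, f(y) ≥ f(x) + ⟨∇f(x), y − x⟩ + (1/(2L_δ))‖∇f(x) − ∇f(y)‖² − δ/2. -/

import Mathlib

/-!
Convexity bounds `f` below by its linearization at `x`. Hölder continuity of the gradient bounds
`f` above by its linearization at `y` plus `L/(1+p)‖z − y‖^{1+p}`, and weighted AM–GM with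
weights `(1+p)/2, (1−p)/2` turns this Hölder term into `L_δ/2‖z − y‖² + δ/2`; the choice of
`L_δ` is exactly what makes the constants match. Comparing the two bounds at
`z = y + (∇f(x) − ∇f(y))/L_δ` gives the claim.
-/

open Set
open scoped RealInnerProductSpace

theorem le_add_deriv_add_div_of_deriv_sub_le_rpow {g g' : ℝ → ℝ} {C p : ℝ} (hp : 0 ≤ p)
    (hg : ∀ t, HasDerivAt g (g' t) t) (hbound : ∀ t ∈ Ico (0 : ℝ) 1, g' t - g' 0 ≤ C * t ^ p) :
    g 1 ≤ g 0 + g' 0 + C / (1 + p) := by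
  have hp' : 1 + p ≠ 0 := by positivity
  have hB : ∀ t, HasDerivAt (fun s => g 0 + g' 0 * s + C / (1 + p) * s ^ (1 + p))
      (g' 0 + C * t ^ p) t := by
    intro t
    have hpow := Real.hasDerivAt_rpow_const (x := t) (p := 1 + p) (Or.inr (by linarith))
    refine ((((hasDerivAt_id' t).const_mul (g' 0)).const_add (g 0)).add
      (hpow.const_mul (C / (1 + p)))).congr_deriv ?_
    rw [add_sub_cancel_left]
    field_simp
  have := image_le_of_deriv_right_le_deriv_boundary (a := 0) (b := 1)
    (fun t _ => (hg t).continuousAt.continuousWithinAt) (fun t _ => (hg t).hasDerivWithinAt)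
    (by simp [Real.zero_rpow hp']) (fun t _ => (hB t).continuousAt.continuousWithinAt)
    (fun t _ => (hB t).hasDerivWithinAt) (fun t ht => by linarith [hbound t ht])
    (right_mem_Icc.2 zero_le_one)
  simpa using this

theorem div_one_add_mul_rpow_le_mul_sq_add {L p δ K : ℝ} (hL : 0 ≤ L) (hp0 : 0 ≤ p) (hp1 : p ≤ 1)
    (hδ : 0 < δ) (hK : ((1 - p) / ((1 + p) * δ)) ^ ((1 - p) / (1 + p)) * L ^ (2 / (1 + p)) ≤ K)
    {t : ℝ} (ht : 0 ≤ t) : L / (1 + p) * t ^ (1 + p) ≤ K / 2 * t ^ 2 + δ / 2 := by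
  -- At `p = 1` we have `γ = 0`; the conventions `0 ^ 0 = 1` and `0⁻¹ = 0` keep every step valid.
  set γ := (1 - p) / ((1 + p) * δ)
  have hγ : 0 ≤ γ := div_nonneg (by linarith) (by positivity)
  have hK0 : 0 ≤ K := le_trans (by positivity) hK
  have hKγ : γ ^ ((1 - p) / 2) * L ≤ K ^ ((1 + p) / 2) := by
    have := Real.rpow_le_rpow (by positivity) hK (by positivity : 0 ≤ (1 + p) / 2)
    rwa [Real.mul_rpow (by positivity) (by positivity), ← Real.rpow_mul hγ, ← Real.rpow_mul hL,
      show (1 - p) / (1 + p) * ((1 + p) / 2) = (1 - p) / 2 by field_simp,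
      show 2 / (1 + p) * ((1 + p) / 2) = 1 by field_simp, Real.rpow_one] at this
  have hγγ : γ ^ ((1 - p) / 2) * γ⁻¹ ^ ((1 - p) / 2) = 1 := by
    rcases hp1.lt_or_eq with hp1 | rfl
    · rw [← Real.mul_rpow hγ (inv_nonneg.2 hγ), mul_inv_cancel₀ (by positivity), Real.one_rpow]
    · norm_num
  have hLK : L ≤ K ^ ((1 + p) / 2) * γ⁻¹ ^ ((1 - p) / 2) := by
    calc L = γ ^ ((1 - p) / 2) * L * γ⁻¹ ^ ((1 - p) / 2) := by
          rw [mul_right_comm, hγγ, one_mul]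
      _ ≤ _ := by gcongr
  have hγδ : (1 - p) / 2 * γ⁻¹ ≤ (1 + p) * δ / 2 :=
    calc (1 - p) / 2 * γ⁻¹ = (1 + p) * δ / 2 * ((1 - p) / (1 - p)) := by
          rw [inv_div]; ring
      _ ≤ (1 + p) * δ / 2 := mul_le_of_le_one_right (by positivity) (div_self_le_one _)
  have htp : t ^ (1 + p) = (t ^ 2) ^ ((1 + p) / 2) := by
    rw [← Real.rpow_natCast, ← Real.rpow_mul ht]
    congr 1
    push_cast
    ring
  calc L / (1 + p) * t ^ (1 + p)
      ≤ K ^ ((1 + p) / 2) * γ⁻¹ ^ ((1 - p) / 2) / (1 + p) * t ^ (1 + p) := by gcongr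
    _ = (K * t ^ 2) ^ ((1 + p) / 2) * γ⁻¹ ^ ((1 - p) / 2) / (1 + p) := by
          rw [Real.mul_rpow hK0 (sq_nonneg t), htp]
          ring
    _ ≤ ((1 + p) / 2 * (K * t ^ 2) + (1 - p) / 2 * γ⁻¹) / (1 + p) := by
          gcongr
          exact Real.geom_mean_le_arith_mean2_weighted (by positivity) (by linarith)
            (by positivity) (inv_nonneg.2 hγ) (by ring)
    _ ≤ ((1 + p) / 2 * (K * t ^ 2) + (1 + p) * δ / 2) / (1 + p) := by gcongr
    _ = K / 2 * t ^ 2 + δ / 2 := by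
          field_simp

section Gradient

variable {E : Type*} [NormedAddCommGroup E] [InnerProductSpace ℝ E] [CompleteSpace E]

theorem HasGradientAt.hasDerivAt_comp_add_smul {f : E → ℝ} {g a v : E} {t : ℝ}
    (h : HasGradientAt f g (a + t • v)) :
    HasDerivAt (fun s : ℝ => f (a + s • v)) ⟪g, v⟫ t := by
  have hline : HasDerivAt (fun s : ℝ => a + s • v) v t := by
    simpa using ((hasDerivAt_id t).smul_const v).const_add a
  have := (hasGradientAt_iff_hasFDerivAt.1 h).comp_hasDerivAt t hline
  rw [InnerProductSpace.toDual_apply_apply] at this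
  exact this

theorem ConvexOn.add_inner_gradient_le {f : E → ℝ} {g a : E} (hf : ConvexOn ℝ univ f)
    (hg : HasGradientAt f g a) (b : E) : f a + ⟪g, b - a⟫ ≤ f b := by
  have hline : ConvexOn ℝ univ (fun t : ℝ => f (a + t • (b - a))) := by
    have h := hf.comp_affineMap (AffineMap.lineMap a b)
    rw [preimage_univ] at h
    have e : (fun t : ℝ => f (a + t • (b - a))) = f ∘ AffineMap.lineMap a b := by
      funext t
      rw [Function.comp_apply, AffineMap.lineMap_apply, vsub_eq_sub, vadd_eq_add, add_comm]
    rwa [e]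
  have hslope := hline.le_slope_of_hasDerivAt (mem_univ 0) (mem_univ 1) one_pos
    (HasGradientAt.hasDerivAt_comp_add_smul (by simpa using hg))
  simp only [slope_def_field, one_smul, add_sub_cancel, zero_smul, add_zero, sub_zero, div_one]
    at hslope
  linarith

theorem le_add_inner_add_rpow_of_holder {f : E → ℝ} {f' : E → E} {L p : ℝ} (hp : 0 ≤ p)
    (hf : ∀ x, HasGradientAt f (f' x) x) (hH : ∀ x y, ‖f' x - f' y‖ ≤ L * ‖x - y‖ ^ p)
    (a b : E) : f b ≤ f a + ⟪f' a, b - a⟫ + L / (1 + p) * ‖b - a‖ ^ (1 + p) := by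
  set v := b - a
  have hbound : ∀ t ∈ Ico (0 : ℝ) 1,
      ⟪f' (a + t • v), v⟫ - ⟪f' (a + (0 : ℝ) • v), v⟫ ≤ L * ‖v‖ ^ (1 + p) * t ^ p := by
    intro t ht
    calc ⟪f' (a + t • v), v⟫ - ⟪f' (a + (0 : ℝ) • v), v⟫ = ⟪f' (a + t • v) - f' a, v⟫ := by
          rw [zero_smul, add_zero, inner_sub_left]
      _ ≤ ‖f' (a + t • v) - f' a‖ * ‖v‖ := real_inner_le_norm _ _
      _ ≤ L * ‖t • v‖ ^ p * ‖v‖ := by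
          gcongr
          simpa using hH (a + t • v) a
      _ = L * ‖v‖ ^ (1 + p) * t ^ p := by
          rw [norm_smul, Real.norm_of_nonneg ht.1, Real.mul_rpow ht.1 (norm_nonneg v),
            Real.rpow_add' (norm_nonneg v) (by positivity), Real.rpow_one]
          ring
  have := le_add_deriv_add_div_of_deriv_sub_le_rpow hp
    (fun t => (hf (a + t • v)).hasDerivAt_comp_add_smul) hbound
  simp only [one_smul, zero_smul, add_zero, v, add_sub_cancel] at this ⊢
  linarith [mul_div_right_comm L (‖b - a‖ ^ (1 + p)) (1 + p)]

theorem ConvexOn.add_inner_add_norm_sub_sq_le {f : E → ℝ} {f' : E → E} {K δ : ℝ} (hK : 0 < K)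
    (hf : ConvexOn ℝ univ f) {x : E} (hx : HasGradientAt f (f' x) x)
    (hupper : ∀ y z, f z ≤ f y + ⟪f' y, z - y⟫ + K / 2 * ‖z - y‖ ^ 2 + δ / 2) (y : E) :
    f x + ⟪f' x, y - x⟫ + 1 / (2 * K) * ‖f' x - f' y‖ ^ 2 - δ / 2 ≤ f y := by
  set w := f' x - f' y
  set z := y + K⁻¹ • w
  have hlower := hf.add_inner_gradient_le hx z
  have hzy : z - y = K⁻¹ • w := add_sub_cancel_left y _
  have hgap : ⟪f' x, z - x⟫ - ⟪f' y, z - y⟫ - K / 2 * ‖z - y‖ ^ 2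
      = ⟪f' x, y - x⟫ + 1 / (2 * K) * ‖w‖ ^ 2 := by
    calc ⟪f' x, z - x⟫ - ⟪f' y, z - y⟫ - K / 2 * ‖z - y‖ ^ 2
        = ⟪f' x, y - x⟫ + ⟪w, z - y⟫ - K / 2 * ‖z - y‖ ^ 2 := by
          rw [show z - x = (y - x) + (z - y) by abel, inner_add_right, inner_sub_left]
          ring
      _ = _ := by
          rw [hzy, real_inner_smul_right, real_inner_self_eq_norm_sq, norm_smul,
            Real.norm_of_nonneg (inv_nonneg.2 hK.le)]
          field_simp
          ring
  linarith [hupper y z]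

end Gradient

/-- Approximate cocoercivity for convex `(L,p)`-Hölder smooth functions: if
`L_δ > 0` with `L_δ ≥ ((1−p)/((1+p)δ))^{(1−p)/(1+p)} · L^{2/(1+p)}` (the first factor being `1`
when `p = 1`, as `Real.rpow` gives `0^0 = 1`), then
`f(y) ≥ f(x) + ⟨∇f(x), y − x⟩ + (1/(2L_δ))‖∇f(x) − ∇f(y)‖² − δ/2` for all `x, y`. -/
theorem stmt3 {n : ℕ} (L p δ Lδ : ℝ) (hL : 0 ≤ L) (hp0 : 0 ≤ p) (hp1 : p ≤ 1) (hδ : 0 < δ)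
    (hLδpos : 0 < Lδ)
    (hLδ : ((1 - p) / ((1 + p) * δ)) ^ ((1 - p) / (1 + p)) * L ^ (2 / (1 + p)) ≤ Lδ)
    (f : EuclideanSpace ℝ (Fin n) → ℝ)
    (f' : EuclideanSpace ℝ (Fin n) → EuclideanSpace ℝ (Fin n))
    (hconv : ConvexOn ℝ Set.univ f)
    (hdiff : ∀ x, HasGradientAt f (f' x) x)
    (hHolder : ∀ x y, ‖f' x - f' y‖ ≤ L * ‖x - y‖ ^ p) :
    ∀ x y, f x + ⟪f' x, y - x⟫ + 1 / (2 * Lδ) * ‖f' x - f' y‖ ^ 2 - δ / 2 ≤ f y := by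
  intro x y
  refine hconv.add_inner_add_norm_sub_sq_le hLδpos (hdiff x) (fun a b => ?_) y
  have hdescent := le_add_inner_add_rpow_of_holder hp0 hdiff hHolder a b
  have hsmoothing := div_one_add_mul_rpow_le_mul_sq_add hL hp0 hp1 hδ hLδ (norm_nonneg (b - a))
  linarith
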